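/- Suppose {μ̂_x}_{x∈I} is a disintegration of μ̂ over π₀ with respect to μ: a family of Borel probability measures on Î, defined for μ-almost every x ∈ I, such that μ̂_x is supported on the fiber π₀^{−1}(x) and μ̂(E) = ∫_I μ̂_x(E) dμ(x) for every Borel set E ⊆ Î. Then for Lebesgue-almost every x ∈ I the measures satisfy α_x = φ(x)·μ̂_x, and consequently μ̂(E) = ∫_I α_x(E) dm(x) for every Borel set E ⊆ Î. -/

import Mathlib

open Set MeasureTheory ENNReal Topology

noncomputable section

namespace Tent

/-- The core interval `I = [0,1]`. -/
def I : Set ℝ := Set.Icc 0 1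

/-- The core tent map of slope `s`, `f(x) = min(s·x + 2 − s, s·(1 − x))`. -/
def f (s : ℝ) (x : ℝ) : ℝ := min (s * x + 2 - s) (s * (1 - x))

/-- The critical point `c = 1 − 1/s`. -/
def c (s : ℝ) : ℝ := 1 - 1 / s

/-- The post-critical set `PC = {c, f(c), f²(c), …}`. -/
def PC (s : ℝ) : Set ℝ := Set.range fun n => (f s)^[n] (c s)

/-- The inverse limit, as a set of sequences: `x_i ∈ I` and `f(x_{i+1}) = x_i`. -/
def IhatSet (s : ℝ) : Set (ℕ → ℝ) :=
  {x | (∀ i, x i ∈ I) ∧ ∀ i, f s (x (i + 1)) = x i}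

/-- The inverse limit space `Î`. -/
abbrev Ihat (s : ℝ) : Type := ↥(IhatSet s)

/-- The metric on `Î`: `d(x,y) = Σ_i |x_i − y_i|/2^i`. -/
def dHat (s : ℝ) (x y : Ihat s) : ℝ := ∑' i : ℕ, |x.1 i - y.1 i| / 2 ^ i

/-- The shift map on sequences: `x ↦ (f(x₀), x₀, x₁, …)`. -/
def fhatSeq (s : ℝ) (x : ℕ → ℝ) : ℕ → ℝ := fun n => Nat.casesOn n (f s (x 0)) fun k => x k

/-- The image under `f̂ⁿ` of a subset of `Î`. -/
def fhatImage (s : ℝ) (n : ℕ) (K : Set (Ihat s)) : Set (Ihat s) :=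
  {y : Ihat s | ∃ x ∈ K, y.1 = (fhatSeq s)^[n] (Subtype.val x)}

/-- The inverse `f̂⁻ⁿ` of the shift homeomorphism: drop the first `n` coordinates. -/
def fhatInv (s : ℝ) (n : ℕ) (x : Ihat s) : Ihat s :=
  ⟨fun i => x.1 (i + n), fun i => x.2.1 (i + n), fun i => by
    show f s (x.1 (i + 1 + n)) = x.1 (i + n)
    rw [show i + 1 + n = i + n + 1 from by omega]
    exact x.2.2 (i + n)⟩

/-- `γ` is an arc in `Î`: homeomorphic to a nontrivial interval of `ℝ`. -/
def IsArc (s : ℝ) (γ : Set (Ihat s)) : Prop :=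
  ∃ J : Set ℝ, J.OrdConnected ∧ J.Nontrivial ∧ Nonempty (γ ≃ₜ J)

/-- `γ` is a closed arc in `Î`: homeomorphic to `[0,1]`. -/
def IsClosedArc (s : ℝ) (γ : Set (Ihat s)) : Prop := Nonempty (γ ≃ₜ (Set.Icc (0:ℝ) 1))

/-- `γ` is an open arc in `Î`: homeomorphic to `(0,1)`. -/
def IsOpenArc (s : ℝ) (γ : Set (Ihat s)) : Prop := Nonempty (γ ≃ₜ (Set.Ioo (0:ℝ) 1))

/-- `x` is an endpoint of the closed arc `γ`. -/
def IsEndpoint (s : ℝ) (x : Ihat s) (γ : Set (Ihat s)) : Prop :=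
  ∃ (e : γ ≃ₜ (Set.Icc (0:ℝ) 1)) (hx : x ∈ γ), (e ⟨x, hx⟩).1 = 0 ∨ (e ⟨x, hx⟩).1 = 1

/-- `γ` is `m`-flat over the nontrivial interval `J ⊆ I`: the projection `π_m`
restricted to `γ` is a homeomorphism onto `J`. -/
def MFlatOver (s : ℝ) (m : ℕ) (γ : Set (Ihat s)) (J : Set ℝ) : Prop :=
  J ⊆ I ∧ J.OrdConnected ∧ J.Nontrivial ∧
    ∃ e : γ ≃ₜ J, ∀ x : γ, (e x).1 = x.1.1 m

/-- `γ` is an `m`-flat arc. -/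
def IsMFlat (s : ℝ) (m : ℕ) (γ : Set (Ihat s)) : Prop := ∃ J : Set ℝ, MFlatOver s m γ J

/-- `γ` is a flat arc: `m`-flat for some `m ≥ 0`. -/
def IsFlat (s : ℝ) (γ : Set (Ihat s)) : Prop := ∃ m : ℕ, IsMFlat s m γ

/-- `γ` is a flat closed arc. -/
def IsFlatClosedArc (s : ℝ) (γ : Set (Ihat s)) : Prop := IsClosedArc s γ ∧ IsFlat s γ

/-- `p 0, …, p k` occur in order along the closed arc `γ` (from one endpoint to the other). -/
def InOrderAlong (s : ℝ) (γ : Set (Ihat s)) (k : ℕ) (p : ℕ → Ihat s) : Prop :=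
  ∃ (e : γ ≃ₜ (Set.Icc (0:ℝ) 1)) (t : ℕ → Set.Icc (0:ℝ) 1),
    (∀ i j, i ≤ j → j ≤ k → t i ≤ t j) ∧ ∀ i ≤ k, (e.symm (t i)).1 = p i

/-- The arclength of a closed arc `γ` in the metric `d`: the supremum over finite
sequences of points occurring in order along `γ` of the sums of successive distances. -/
def arcLength (s : ℝ) (γ : Set (Ihat s)) : ℝ≥0∞ :=
  ⨆ (k : ℕ) (p : ℕ → Ihat s) (_ : InOrderAlong s γ k p),
    ENNReal.ofReal (∑ i ∈ Finset.range k, dHat s (p i) (p (i + 1)))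

/-- A continuum: a compact connected subset of `Î` with more than one point. -/
def IsContinuum (s : ℝ) (K : Set (Ihat s)) : Prop :=
  IsCompact K ∧ IsConnected K ∧ K.Nontrivial

/-- `K` is `ε`-dense in `Î`. -/
def EpsDense (s : ℝ) (ε : ℝ) (K : Set (Ihat s)) : Prop :=
  ∀ x : Ihat s, ∃ y ∈ K, dHat s x y ≤ ε

/-- `S` is metrically infinite: contains flat closed arcs of arbitrarily large length. -/
def MetricallyInfinite (s : ℝ) (S : Set (Ihat s)) : Prop :=
  ∀ N : ℝ, 0 < N → ∃ γ : Set (Ihat s), γ ⊆ S ∧ IsFlatClosedArc s γ ∧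
    ENNReal.ofReal N < arcLength s γ

/-- An arc is bi-dense if, for some point `p` in it, both connected components of
`γ ∖ {p}` are dense in `Î`. -/
def BiDense (s : ℝ) (γ : Set (Ihat s)) : Prop :=
  ∃ p ∈ γ, ∀ q ∈ γ \ {p}, Dense (connectedComponentIn (γ \ {p}) q)

/-- An arc is metrically bi-infinite if, for some point `p` in it, both connected
components of `γ ∖ {p}` are metrically infinite. -/
def MetricallyBiInfinite (s : ℝ) (γ : Set (Ihat s)) : Prop :=
  ∃ p ∈ γ, ∀ q ∈ γ \ {p}, MetricallyInfinite s (connectedComponentIn (γ \ {p}) q)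

/-- `x` is globally leaf regular: its path component is a bi-dense, metrically
bi-infinite open arc. -/
def GloballyLeafRegular (s : ℝ) (x : Ihat s) : Prop :=
  IsOpenArc s (pathComponent x) ∧ BiDense s (pathComponent x) ∧
    MetricallyBiInfinite s (pathComponent x)

/-- A `0`-box over `J`: a union of arcs, each `0`-flat over `J`. -/
def ZeroBoxOver (s : ℝ) (B : Set (Ihat s)) (J : Set ℝ) : Prop :=
  ∃ A : Set (Set (Ihat s)), (∀ γ ∈ A, MFlatOver s 0 γ J) ∧ B = ⋃₀ A

/-- An `m`-box over `J`: `f̂⁻ᵐ(B)` is a `0`-box over `J`. -/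
def MBoxOver (s : ℝ) (m : ℕ) (B : Set (Ihat s)) (J : Set ℝ) : Prop :=
  ZeroBoxOver s (fhatInv s m '' B) J

/-- The maximal `m`-box over `J`: the union of all arcs `m`-flat over `J`. -/
def maximalMBox (s : ℝ) (m : ℕ) (J : Set ℝ) : Set (Ihat s) :=
  ⋃₀ {γ : Set (Ihat s) | MFlatOver s m γ J}

/-- The point cylinder `[y₀, …, y_n]`. -/
def pointCyl (s : ℝ) (y : ℕ → ℝ) (n : ℕ) : Set (Ihat s) :=
  {z : Ihat s | ∀ i ≤ n, z.1 i = y i}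

/-!
For a word `w ∈ {0,1}ⁿ` let `C_w ⊆ Î` be the set of points whose coordinates `z_n, …, z_1` lie in
the laps of `f` prescribed by `w`, and let `g_w` be the matching affine inverse branch of `fⁿ`,
of slope `±s⁻ⁿ`. As `π_n` pushes `μ̂` to `φ·m`, changing variables along `g_w` gives
`μ̂(C_w ∩ π₀⁻¹A) = ∫_A s⁻ⁿ φ(g_w u) du`, while the disintegration gives `∫_A φ(u) μ̂_u(C_w) du`.
The first integrand is measurable, so comparing the two over all Borel `A` (and likewise for the
complement of `C_w`) yields `φ(x) μ̂_x(C_w) = s⁻ⁿ φ(g_w x)` for a.e. `x` and all of the countably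
many `w`. On the fibre over `x`, `C_w` is the point cylinder `[x, …, g_w x]`, where `α_x` takes
the same value; and as the fibre has finitely many points at each level, a measure carried by it
is determined by its values on point cylinders. Integrating over `x` gives the formula for `μ̂(E)`.
-/

end Tent

lemma lintegral_comp_mul_add (F : ℝ → ℝ≥0∞) {a : ℝ} (ha : a ≠ 0) (b : ℝ) :
    ∫⁻ t, F (a * t + b) = ENNReal.ofReal |a⁻¹| * ∫⁻ u, F u := by
  have h := lintegral_map_equiv (fun u => F (u + b)) (Homeomorph.mulLeft₀ a ha).toMeasurableEquiv
    (μ := volume)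
  have hmap : Measure.map (Homeomorph.mulLeft₀ a ha).toMeasurableEquiv volume
      = Measure.map (a * ·) volume := rfl
  rw [hmap, Real.map_volume_mul_left ha, lintegral_smul_measure,
    lintegral_add_right_eq_self F b] at h
  exact h.symm

theorem BoundedVariationOn.measurable_indicator {φ : ℝ → ℝ} {a b : ℝ}
    (hφ : BoundedVariationOn φ (Icc a b)) : Measurable ((Icc a b).indicator φ) := by
  rcases lt_or_ge b a with hba | hab
  · simp [Icc_eq_empty_of_lt hba, measurable_const]
  obtain ⟨p, q, hp, hq, rfl⟩ := hφ.locallyBoundedVariationOn.exists_monotoneOn_sub_monotoneOn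
  have hp' : Monotone fun x : Icc a b => p x := hp.monotone
  have hq' : Monotone fun x : Icc a b => q x := hq.monotone
  rw [indicator_congr fun x hx => (by simp [IccExtend_of_mem hab _ hx] :
    (p - q) x = (IccExtend hab (fun x => p x) - IccExtend hab (fun x => q x)) x)]
  exact ((hp'.IccExtend hab).measurable.sub (hq'.IccExtend hab).measurable).indicator
    measurableSet_Icc

section Disintegration

variable {X Y : Type*} [MeasurableSpace X] [MeasurableSpace Y] {ν : Measure X} {ρ : Measure Y}
  {π : Y → X} {d : X → ℝ≥0∞} {κ : X → Measure Y}

lemma measure_inter_preimage_eq_setLIntegral_mul (hπ : Measurable π) (hd : Measurable d)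
    (hd_fin : ∀ x, d x ≠ ∞) (hκsupp : ∀ᵐ x ∂ν.withDensity d, κ x {y | π y ≠ x} = 0)
    (hdis : ∀ E, MeasurableSet E → ρ E = ∫⁻ x, κ x E ∂ν.withDensity d)
    {E : Set Y} (hE : MeasurableSet E) {A : Set X} (hA : MeasurableSet A) :
    ρ (E ∩ π ⁻¹' A) = ∫⁻ x in A, d x * κ x E ∂ν := by
  have hfiber : ∀ᵐ x ∂ν.withDensity d, κ x (E ∩ π ⁻¹' A) = A.indicator (fun x => κ x E) x := by
    filter_upwards [hκsupp] with x hx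
    by_cases hxA : x ∈ A
    · rw [indicator_of_mem hxA]
      refine measure_inter_conull' (measure_mono_null (fun y hy (hyx : π y = x) => hy.2 ?_) hx)
      rwa [mem_preimage, hyx]
    · rw [indicator_of_notMem hxA]
      exact measure_mono_null (fun y hy (hyx : π y = x) => hxA (hyx ▸ hy.2)) hx
  rw [hdis _ (hE.inter (hπ hA)), lintegral_congr_ae hfiber,
    lintegral_withDensity_eq_lintegral_mul_non_measurable _ hd
      (ae_of_all _ fun x => (hd_fin x).lt_top), ← lintegral_indicator hA]
  congr with x
  by_cases hx : x ∈ A <;> simp [hx]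

theorem ae_mul_apply_eq_of_disintegration [SigmaFinite ν] [IsFiniteMeasure ρ]
    (hπ : Measurable π) (hd : Measurable d) (hd_fin : ∀ x, d x ≠ ∞)
    (hκprob : ∀ᵐ x ∂ν.withDensity d, IsProbabilityMeasure (κ x))
    (hκsupp : ∀ᵐ x ∂ν.withDensity d, κ x {y | π y ≠ x} = 0)
    (hdis : ∀ E, MeasurableSet E → ρ E = ∫⁻ x, κ x E ∂ν.withDensity d)
    {E : Set Y} (hE : MeasurableSet E) {h : X → ℝ≥0∞} (hh : Measurable h)
    (hEh : ∀ A, MeasurableSet A → ρ (E ∩ π ⁻¹' A) = ∫⁻ x in A, h x ∂ν) :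
    ∀ᵐ x ∂ν, d x * κ x E = h x := by
  have key : ∀ {E : Set Y}, MeasurableSet E → ∀ {A : Set X}, MeasurableSet A →
      ρ (E ∩ π ⁻¹' A) = ∫⁻ x in A, d x * κ x E ∂ν :=
    measure_inter_preimage_eq_setLIntegral_mul hπ hd hd_fin hκsupp hdis
  have hprob : ∀ᵐ x ∂ν, d x ≠ 0 → IsProbabilityMeasure (κ x) := (ae_withDensity_iff hd).mp hκprob
  have hd_eq : ∀ᵐ x ∂ν, d x * κ x univ = d x := by
    filter_upwards [hprob] with x hx
    by_cases hd0 : d x = 0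
    · simp [hd0]
    · have := hx hd0
      simp
  have hle : ∀ᵐ x ∂ν, h x ≤ d x * κ x E :=
    ae_le_of_forall_setLIntegral_le_of_sigmaFinite hh fun A hA _ =>
      ((hEh A hA).symm.trans (key hE hA)).le
  have hle_d : ∀ᵐ x ∂ν, h x ≤ d x := by
    filter_upwards [hle, hd_eq] with x h₁ h₂
    calc h x ≤ d x * κ x E := h₁
      _ ≤ d x * κ x univ := by gcongr; exact subset_univ E
      _ = d x := h₂
  -- Running the same argument on `Eᶜ`, whose density is `d - h`, gives the reverse inequality.
  have hle_compl : ∀ᵐ x ∂ν, d x - h x ≤ d x * κ x Eᶜ := by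
    refine ae_le_of_forall_setLIntegral_le_of_sigmaFinite (hd.sub hh) fun A hA _ => le_of_eq ?_
    have hfin : ∫⁻ x in A, h x ∂ν ≠ ∞ := by rw [← hEh A hA]; exact measure_ne_top _ _
    calc ∫⁻ x in A, d x - h x ∂ν = ∫⁻ x in A, d x ∂ν - ∫⁻ x in A, h x ∂ν :=
          lintegral_sub hh hfin (ae_restrict_of_ae hle_d)
      _ = ρ (π ⁻¹' A) - ρ (E ∩ π ⁻¹' A) := by
          rw [← hEh A hA, ← univ_inter (π ⁻¹' A), key MeasurableSet.univ hA]
          exact congrArg (· - _) (lintegral_congr_ae (ae_restrict_of_ae hd_eq)).symm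
      _ = ρ (Eᶜ ∩ π ⁻¹' A) := by
          rw [← measure_sdiff inter_subset_right ((hE.inter (hπ hA)).nullMeasurableSet)
            (measure_ne_top _ _), sdiff_inter_self_eq_sdiff, sdiff_eq_compl_inter]
      _ = ∫⁻ x in A, d x * κ x Eᶜ ∂ν := key hE.compl hA
  filter_upwards [hle, hle_compl, hprob] with x h₁ h₂ h₃
  by_cases hd0 : d x = 0
  · simp only [hd0, zero_mul, nonpos_iff_eq_zero] at h₁ ⊢
    exact h₁.symm
  · have := h₃ hd0
    rw [prob_compl_eq_one_sub hE, ENNReal.mul_sub fun _ _ => hd_fin x, mul_one] at h₂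
    have hκE : d x * κ x E ≤ d x := mul_le_of_le_one_right' prob_le_one
    exact le_antisymm ((ENNReal.sub_le_sub_iff_left hκE (hd_fin x)).mp h₂) h₁

end Disintegration

namespace Tent

section

variable {s : ℝ} {d : ℝ → ℝ≥0∞}

def lapDom (s : ℝ) : Bool → Set ℝ
  | false => Ico 0 (c s)
  | true => Icc (c s) 1

def lapMap (s : ℝ) : Bool → ℝ → ℝ
  | false, t => s * t + 2 - s
  | true, t => s * (1 - t)

def lapInv (s : ℝ) : Bool → ℝ → ℝ
  | false, u => (u + s - 2) / s
  | true, u => 1 - u / s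

lemma lapInv_lapMap (hs : s ≠ 0) (β : Bool) (t : ℝ) : lapInv s β (lapMap s β t) = t := by
  cases β <;> simp only [lapInv, lapMap] <;> field_simp <;> ring

lemma lapMap_lapInv (hs : s ≠ 0) (β : Bool) (u : ℝ) : lapMap s β (lapInv s β u) = u := by
  cases β <;> simp only [lapInv, lapMap] <;> field_simp <;> ring

lemma exists_lapMap_eq_mul_add (hs : 0 < s) (β : Bool) :
    ∃ a b : ℝ, a ≠ 0 ∧ |a⁻¹| = s⁻¹ ∧ ∀ t, lapMap s β t = a * t + b := by
  cases β
  · exact ⟨s, 2 - s, hs.ne', by rw [abs_of_pos (inv_pos.mpr hs)],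
      fun t => by simp only [lapMap]; ring⟩
  · exact ⟨-s, s, neg_ne_zero.mpr hs.ne', by rw [inv_neg, abs_neg, abs_of_pos (inv_pos.mpr hs)],
      fun t => by simp only [lapMap]; ring⟩

lemma f_eq_lapMap (hs : 0 < s) {β : Bool} {t : ℝ} (ht : t ∈ lapDom s β) :
    f s t = lapMap s β t := by
  have hc : s * c s = s - 1 := by simp only [c]; field_simp
  cases β
  · have : s * t < s * c s := mul_lt_mul_of_pos_left ht.2 hs
    exact min_eq_left (by linarith)
  · have : s * c s ≤ s * t := mul_le_mul_of_nonneg_left ht.1 hs.le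
    exact min_eq_right (by linarith)

lemma exists_f_eq_lapMap (t : ℝ) : ∃ β, f s t = lapMap s β t := by
  rcases min_choice (s * t + 2 - s) (s * (1 - t)) with h | h
  exacts [⟨false, h⟩, ⟨true, h⟩]

lemma f_lapInv (hs : 0 < s) {β : Bool} {u : ℝ} (hu : lapInv s β u ∈ lapDom s β) :
    f s (lapInv s β u) = u := by
  rw [f_eq_lapMap hs hu, lapMap_lapInv hs.ne']

lemma lapInv_f (hs : 0 < s) {β : Bool} {t : ℝ} (ht : t ∈ lapDom s β) :
    lapInv s β (f s t) = t := by
  rw [f_eq_lapMap hs ht, lapInv_lapMap hs.ne']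

lemma mem_lapDom_decide {t : ℝ} (ht : t ∈ I) : t ∈ lapDom s (decide (c s ≤ t)) := by
  by_cases h : c s ≤ t
  · rw [decide_eq_true h]; exact ⟨h, ht.2⟩
  · rw [decide_eq_false h]; exact ⟨ht.1, not_le.mp h⟩

lemma measurableSet_lapDom (β : Bool) : MeasurableSet (lapDom s β) := by
  cases β
  exacts [measurableSet_Ico, measurableSet_Icc]

lemma measurable_lapInv (β : Bool) : Measurable (lapInv s β) := by
  cases β <;> unfold lapInv <;> fun_prop

lemma measurable_f : Measurable (f s) := by
  unfold f; fun_prop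

lemma measurable_iterate_f (n : ℕ) : Measurable (f s)^[n] := measurable_f.iterate n

lemma setLIntegral_lapDom (hs : 0 < s) (β : Bool) (F : ℝ → ℝ → ℝ≥0∞) :
    ∫⁻ t in lapDom s β, F (f s t) t
      = ENNReal.ofReal s⁻¹ * ∫⁻ u in lapInv s β ⁻¹' lapDom s β, F u (lapInv s β u) := by
  have hF : ∀ t, (lapDom s β).indicator (fun t => F (f s t) t) t
      = (lapInv s β ⁻¹' lapDom s β).indicator (fun u => F u (lapInv s β u)) (lapMap s β t) := by
    intro t
    by_cases ht : t ∈ lapDom s β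
    · have ht' : lapMap s β t ∈ lapInv s β ⁻¹' lapDom s β := by
        rwa [mem_preimage, lapInv_lapMap hs.ne']
      rw [indicator_of_mem ht, indicator_of_mem ht', lapInv_lapMap hs.ne', f_eq_lapMap hs ht]
    · have ht' : lapMap s β t ∉ lapInv s β ⁻¹' lapDom s β := by
        rwa [mem_preimage, lapInv_lapMap hs.ne']
      rw [indicator_of_notMem ht, indicator_of_notMem ht']
  obtain ⟨a, b, ha, habs, hab⟩ := exists_lapMap_eq_mul_add hs β
  simp_rw [← lintegral_indicator (measurableSet_lapDom β), hF, hab,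
    ← lintegral_indicator ((measurableSet_lapDom β).preimage (measurable_lapInv β))]
  rw [lintegral_comp_mul_add _ ha, habs]

/- A word `w = [β₁, …, βₙ]` is read from the deepest level: `z ∈ itinCyl s w` means
`z_{n+1-k} ∈ lapDom s βₖ`, and on `invBranchDom s w` the map `invBranch s w` is the branch of
`f⁻ⁿ` sending `z₀` to `z_n`. -/
def invBranch (s : ℝ) : List Bool → ℝ → ℝ
  | [] => id
  | β :: w => lapInv s β ∘ invBranch s w

def invBranchDom (s : ℝ) : List Bool → Set ℝ
  | [] => univ
  | β :: w => invBranchDom s w ∩ invBranch s w ⁻¹' (lapInv s β ⁻¹' lapDom s β)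

def itinDom (s : ℝ) : List Bool → Set ℝ
  | [] => univ
  | β :: w => lapDom s β ∩ f s ⁻¹' itinDom s w

def itinCyl (s : ℝ) (w : List Bool) : Set (Ihat s) := {z | z.1 w.length ∈ itinDom s w}

lemma measurable_invBranch : ∀ w, Measurable (invBranch s w)
  | [] => measurable_id
  | β :: w => (measurable_lapInv β).comp (measurable_invBranch w)

lemma measurableSet_invBranchDom : ∀ w, MeasurableSet (invBranchDom s w)
  | [] => MeasurableSet.univ
  | β :: w => (measurableSet_invBranchDom w).inter
      (((measurableSet_lapDom β).preimage (measurable_lapInv β)).preimage (measurable_invBranch w))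

lemma measurableSet_itinDom : ∀ w, MeasurableSet (itinDom s w)
  | [] => MeasurableSet.univ
  | β :: w => (measurableSet_lapDom β).inter ((measurableSet_itinDom w).preimage measurable_f)

lemma measurable_coord (n : ℕ) : Measurable fun z : Ihat s => z.1 n :=
  (measurable_pi_apply n).comp measurable_subtype_coe

lemma measurableSet_itinCyl (w : List Bool) : MeasurableSet (itinCyl s w) :=
  measurable_coord _ (measurableSet_itinDom w)

lemma mem_itinDom_iff (hs : 0 < s) : ∀ (w : List Bool) (t : ℝ), t ∈ itinDom s w ↔
    (f s)^[w.length] t ∈ invBranchDom s w ∧ invBranch s w ((f s)^[w.length] t) = t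
  | [], t => by simp [itinDom, invBranchDom, invBranch]
  | β :: w, t => by
    simp only [itinDom, invBranchDom, invBranch, List.length_cons, Function.iterate_succ_apply,
      mem_inter_iff, mem_preimage, mem_itinDom_iff hs w (f s t), Function.comp_apply]
    constructor
    · rintro ⟨ht, hu, hf⟩
      rw [hf, lapInv_f hs ht]
      exact ⟨⟨hu, ht⟩, rfl⟩
    · rintro ⟨⟨hu, hβ⟩, ht⟩
      have hft : invBranch s w ((f s)^[w.length] (f s t)) = f s t := by
        conv_rhs => rw [← ht]
        exact (f_lapInv hs hβ).symm
      exact ⟨ht ▸ hβ, hu, hft⟩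

lemma exists_mem_itinDom : ∀ (n : ℕ) (t : ℝ), (∀ i < n, (f s)^[i] t ∈ I) →
    ∃ w : List Bool, w.length = n ∧ t ∈ itinDom s w
  | 0, _, _ => ⟨[], rfl, trivial⟩
  | n + 1, t, ht => by
    obtain ⟨w, hw, hwt⟩ := exists_mem_itinDom n (f s t) fun i hi => by
      simpa only [Function.iterate_succ_apply] using ht (i + 1) (by omega)
    exact ⟨decide (c s ≤ t) :: w, by simp [hw], mem_lapDom_decide (ht 0 (by omega)), hwt⟩

lemma setLIntegral_itinDom (hs : 0 < s) : ∀ (w : List Bool) (F : ℝ → ℝ → ℝ≥0∞),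
    ∫⁻ t in itinDom s w, F ((f s)^[w.length] t) t
      = ENNReal.ofReal s⁻¹ ^ w.length * ∫⁻ u in invBranchDom s w, F u (invBranch s w u)
  | [], F => by simp [itinDom, invBranchDom, invBranch]
  | β :: w, F => by
    have hD := measurableSet_itinDom (s := s) w
    have hB := (measurableSet_lapDom (s := s) β).preimage (measurable_lapInv (s := s) β)
    simp only [itinDom, invBranchDom, invBranch, List.length_cons, Function.iterate_succ_apply,
      Function.comp_apply]
    calc ∫⁻ t in lapDom s β ∩ f s ⁻¹' itinDom s w, F ((f s)^[w.length] (f s t)) t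
        = ∫⁻ t in lapDom s β,
            (itinDom s w).indicator (fun v => F ((f s)^[w.length] v) t) (f s t) := by
          rw [inter_comm, ← setLIntegral_indicator (hD.preimage (measurable_f (s := s)))]
          rfl
      _ = ENNReal.ofReal s⁻¹ * ∫⁻ u in itinDom s w, (lapInv s β ⁻¹' lapDom s β).indicator
            (fun u => F ((f s)^[w.length] u) (lapInv s β u)) u := by
          rw [setLIntegral_lapDom hs β fun v t => (itinDom s w).indicator
              (fun v => F ((f s)^[w.length] v) t) v, ← lintegral_indicator hB,
            ← lintegral_indicator hD]
          congr 1
          refine lintegral_congr fun u => ?_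
          by_cases hu : u ∈ itinDom s w <;> by_cases hu' : u ∈ lapInv s β ⁻¹' lapDom s β <;>
            simp [hu, hu']
      _ = ENNReal.ofReal s⁻¹ * (ENNReal.ofReal s⁻¹ ^ w.length * ∫⁻ u in invBranchDom s w,
            (lapInv s β ⁻¹' lapDom s β).indicator (fun v => F u (lapInv s β v))
              (invBranch s w u)) := by
          rw [← setLIntegral_itinDom hs w]
          rfl
      _ = ENNReal.ofReal s⁻¹ ^ (w.length + 1) * ∫⁻ u in invBranchDom s w ∩
            invBranch s w ⁻¹' (lapInv s β ⁻¹' lapDom s β), F u (lapInv s β (invBranch s w u)) := by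
          rw [inter_comm, ← setLIntegral_indicator (hB.preimage (measurable_invBranch w)),
            pow_succ, mul_comm _ (ENNReal.ofReal s⁻¹), mul_assoc]
          rfl

lemma iterate_f_coord (z : Ihat s) : ∀ n i, (f s)^[n] (z.1 (i + n)) = z.1 i
  | 0, _ => rfl
  | n + 1, i => by
    rw [Function.iterate_succ_apply, ← iterate_f_coord z n i]
    exact congrArg _ (z.2.2 (i + n))

lemma iterate_f_coord_zero (z : Ihat s) (n : ℕ) : (f s)^[n] (z.1 n) = z.1 0 := by
  simpa using iterate_f_coord z n 0

lemma coord_eq_of_coord_eq_of_le {z z' : Ihat s} {n i : ℕ} (h : z.1 n = z'.1 n) (hi : i ≤ n) :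
    z.1 i = z'.1 i := by
  obtain ⟨k, rfl⟩ := Nat.exists_eq_add_of_le hi
  rw [← iterate_f_coord z k i, ← iterate_f_coord z' k i, h]

lemma pointCyl_val (z : Ihat s) (n : ℕ) : pointCyl s z.1 n = {z' | z'.1 n = z.1 n} :=
  ext fun _ => ⟨fun h => h n le_rfl, fun h _ hi => coord_eq_of_coord_eq_of_le h hi⟩

lemma itinCyl_inter_coord_zero (w : List Bool) (A : Set ℝ) :
    itinCyl s w ∩ {z | z.1 0 ∈ A}
      = {z | z.1 w.length ∈ itinDom s w ∩ (f s)^[w.length] ⁻¹' A} := by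
  ext z
  simp only [itinCyl, mem_inter_iff, mem_ofPred_eq, mem_preimage, iterate_f_coord_zero]

def transferBranch (s : ℝ) (d : ℝ → ℝ≥0∞) (w : List Bool) : ℝ → ℝ≥0∞ :=
  (invBranchDom s w).indicator fun u => ENNReal.ofReal s⁻¹ ^ w.length * d (invBranch s w u)

lemma measurable_transferBranch (hd : Measurable d) (w : List Bool) :
    Measurable (transferBranch s d w) :=
  (measurable_const.mul (hd.comp (measurable_invBranch w))).indicator
    (measurableSet_invBranchDom w)

lemma withDensity_itinDom_inter_preimage (hs : 0 < s) (w : List Bool) {A : Set ℝ}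
    (hA : MeasurableSet A) :
    volume.withDensity d (itinDom s w ∩ (f s)^[w.length] ⁻¹' A)
      = ∫⁻ u in A, transferBranch s d w u := by
  have hA' := hA.preimage (measurable_iterate_f (s := s) w.length)
  rw [withDensity_apply _ ((measurableSet_itinDom w).inter hA'), inter_comm,
    ← setLIntegral_indicator hA']
  refine (setLIntegral_itinDom hs w fun u t => A.indicator (fun _ => d t) u).trans ?_
  change _ * ∫⁻ u in invBranchDom s w, A.indicator (fun u => d (invBranch s w u)) u = _
  rw [transferBranch, setLIntegral_indicator (measurableSet_invBranchDom w),
    setLIntegral_indicator hA, lintegral_const_mul' _ _ (by finiteness), inter_comm]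

lemma measure_itinCyl_inter_coord_zero (hs : 0 < s) {μhat : Measure (Ihat s)}
    (hmarg : ∀ n, μhat.map (fun z : Ihat s => z.1 n) = volume.withDensity d)
    (w : List Bool) {A : Set ℝ} (hA : MeasurableSet A) :
    μhat (itinCyl s w ∩ {z | z.1 0 ∈ A}) = ∫⁻ u in A, transferBranch s d w u := by
  rw [itinCyl_inter_coord_zero, ← withDensity_itinDom_inter_preimage hs w hA, ← hmarg w.length,
    Measure.map_apply (measurable_coord _)
      ((measurableSet_itinDom w).inter (hA.preimage (measurable_iterate_f _)))]
  rfl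

lemma finite_preimage_f (hs : s ≠ 0) (u : ℝ) : (f s ⁻¹' {u}).Finite := by
  refine (toFinite {lapInv s false u, lapInv s true u}).subset fun t (ht : f s t = u) => ?_
  obtain ⟨β, hβ⟩ := exists_f_eq_lapMap (s := s) t
  have h := lapInv_lapMap hs β t
  rw [← hβ, ht] at h
  cases β <;> simp [h]

lemma finite_preimage_iterate_f (hs : s ≠ 0) (x : ℝ) : ∀ n, ((f s)^[n] ⁻¹' {x}).Finite
  | 0 => finite_singleton x
  | n + 1 => by
    rw [Function.iterate_succ, preimage_comp]
    exact (finite_preimage_iterate_f hs x n).preimage' fun u _ => finite_preimage_f hs u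

theorem measure_eq_of_pointCyl (hs : s ≠ 0) {x : ℝ} {ν₁ ν₂ : Measure (Ihat s)}
    [IsFiniteMeasure ν₁] (h₁ : ν₁ {z | z.1 0 ≠ x} = 0) (h₂ : ν₂ {z | z.1 0 ≠ x} = 0)
    (h : ∀ (z : Ihat s) (n : ℕ), z.1 0 = x → ν₁ (pointCyl s z.1 n) = ν₂ (pointCyl s z.1 n)) :
    ν₁ = ν₂ := by
  set F : Set (Ihat s) := {z | z.1 0 = x}
  have hcyl : ∀ C ∈ measurableCylinders (fun _ : ℕ => ℝ),
      ν₁ (Subtype.val ⁻¹' C) = ν₂ (Subtype.val ⁻¹' C) := by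
    intro C hC
    obtain ⟨t, S, -, rfl⟩ := (mem_measurableCylinders C).mp hC
    set n := t.sup id
    set P := (fun z : Ihat s => z.1 n) '' (Subtype.val ⁻¹' cylinder t S ∩ F)
    have hP : P.Countable := by
      refine ((finite_preimage_iterate_f hs x n).subset ?_).countable
      rintro _ ⟨z, ⟨-, hz⟩, rfl⟩
      exact (iterate_f_coord_zero z n).trans hz
    have hfiber : Subtype.val ⁻¹' cylinder t S ∩ F = (fun z : Ihat s => z.1 n) ⁻¹' P ∩ F := by
      refine Subset.antisymm (fun z hz => ⟨⟨z, hz, rfl⟩, hz.2⟩) ?_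
      rintro z ⟨⟨z', ⟨hz'C, -⟩, hzz'⟩, hzF⟩
      refine ⟨?_, hzF⟩
      have hrestr : t.restrict z.1 = t.restrict z'.1 :=
        funext fun i => coord_eq_of_coord_eq_of_le hzz'.symm (Finset.le_sup (f := id) i.2)
      exact (mem_cylinder _ _ _).mpr (hrestr ▸ hz'C)
    have hsum : ∀ ν : Measure (Ihat s), ν {z | z.1 0 ≠ x} = 0 → ν (Subtype.val ⁻¹' cylinder t S)
        = ∑' p : P, ν ((fun z : Ihat s => z.1 n) ⁻¹' {p.1}) := by
      intro ν hν
      rw [← measure_inter_conull (t := F) hν, hfiber, measure_inter_conull (t := F) hν,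
        tsum_measure_preimage_singleton hP
          fun p _ => measurable_coord n (measurableSet_singleton p)]
    rw [hsum ν₁ h₁, hsum ν₂ h₂]
    refine tsum_congr ?_
    rintro ⟨_, z, ⟨-, hzF⟩, rfl⟩
    have := h z n hzF
    rwa [pointCyl_val] at this
  refine ext_of_generate_finite _ ?_ (isPiSystem_measurableCylinders.comap Subtype.val) ?_ ?_
  · change MeasurableSpace.comap Subtype.val MeasurableSpace.pi = _
    rw [← generateFrom_measurableCylinders, MeasurableSpace.comap_generateFrom]
    rfl
  · rintro _ ⟨C, hC, rfl⟩
    exact hcyl C hC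
  · exact hcyl univ (univ_mem_measurableCylinders _)

lemma eq_smul_of_forall_itinCyl (hs : 0 < s) {x : ℝ} {ν κ' : Measure (Ihat s)}
    [IsFiniteMeasure κ'] (hdx : d x ≠ ∞)
    (hν_supp : ν {z | z.1 0 ≠ x} = 0) (hκ_supp : κ' {z | z.1 0 ≠ x} = 0)
    (hν : ∀ (z : Ihat s) (n : ℕ), z.1 0 = x →
      ν (pointCyl s z.1 n) = ENNReal.ofReal s⁻¹ ^ n * d (z.1 n))
    (hκ : ∀ w, d x * κ' (itinCyl s w) = transferBranch s d w x) :
    ν = d x • κ' := by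
  have := κ'.smul_finite hdx
  refine (measure_eq_of_pointCyl hs.ne' (by simp [hκ_supp]) hν_supp fun z n hz => ?_).symm
  obtain ⟨w, rfl, hw⟩ := exists_mem_itinDom (s := s) n (z.1 n) fun i hi => by
    rw [← Nat.sub_add_cancel hi.le, iterate_f_coord]
    exact z.2.1 _
  obtain ⟨hxw, hzw⟩ := (mem_itinDom_iff hs w _).mp hw
  rw [iterate_f_coord_zero, hz] at hxw hzw
  -- Both sets meet the fibre over `x` in `{z' | z'.1 w.length = z.1 w.length}`.
  have hcyl : κ' (pointCyl s z.1 w.length) = κ' (itinCyl s w) := by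
    rw [← measure_inter_conull (t := {z' | z'.1 0 = x}) hκ_supp,
      ← measure_inter_conull (s := itinCyl s w) (t := {z' | z'.1 0 = x}) hκ_supp]
    congr 1
    ext z'
    simp only [pointCyl_val, itinCyl, mem_inter_iff, mem_ofPred_eq]
    refine and_congr_left fun hz' => ⟨fun h => h ▸ hw, fun h => ?_⟩
    rw [← hzw, ← hz', ← iterate_f_coord_zero z' w.length]
    exact ((mem_itinDom_iff hs w _).mp h).2.symm
  rw [Measure.smul_apply, smul_eq_mul, hcyl, hκ, transferBranch, indicator_of_mem hxw, hzw,
    hν z _ hz]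

end

theorem disintegration_formula_general (s : ℝ) (hs₁ : Real.sqrt 2 < s)
    (φ : ℝ → ℝ)
    (hφpos : ∀ x ∈ I \ PC s, 0 < φ x)
    (hφbv : BoundedVariationOn φ I)
    (μ : Measure ℝ)
    (hμdens : μ = (volume.restrict I).withDensity fun x => ENNReal.ofReal (φ x))
    (μhat : Measure (Ihat s)) (hμhatprob : IsProbabilityMeasure μhat)
    (hmarg : ∀ n : ℕ, μhat.map (fun x : Ihat s => x.1 n) = μ)
    (α : ℝ → Measure (Ihat s))
    (hαsupp : ∀ x ∈ I \ PC s, α x {z : Ihat s | z.1 0 ≠ x} = 0)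
    (hαcyl : ∀ x ∈ I \ PC s, ∀ (y : ℕ → ℝ) (n : ℕ), y 0 = x →
      (∀ i ≤ n, y i ∈ I) → (∀ i < n, f s (y (i + 1)) = y i) →
      α x (pointCyl s y n) = ENNReal.ofReal (φ (y n) / s ^ n))
    (κ : ℝ → Measure (Ihat s))
    (hκprob : ∀ᵐ x ∂μ, IsProbabilityMeasure (κ x))
    (hκsupp : ∀ᵐ x ∂μ, κ x {z : Ihat s | z.1 0 ≠ x} = 0)
    (hκdis : ∀ E : Set (Ihat s), MeasurableSet E → μhat E = ∫⁻ x, κ x E ∂μ) :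
    (∀ᵐ x ∂(volume.restrict I), α x = ENNReal.ofReal (φ x) • κ x) ∧
    ∀ E : Set (Ihat s), MeasurableSet E → μhat E = ∫⁻ x in I, α x E ∂volume := by
  have hs : 0 < s := (Real.sqrt_nonneg 2).trans_lt hs₁
  have hI : MeasurableSet I := measurableSet_Icc
  rw [← withDensity_indicator hI] at hμdens
  subst hμdens
  set d : ℝ → ℝ≥0∞ := I.indicator fun x => ENNReal.ofReal (φ x)
  have hd : Measurable d := by
    convert hφbv.measurable_indicator.ennreal_ofReal using 1
    exact indicator_comp_of_zero ENNReal.ofReal_zero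
  have hd_fin : ∀ x, d x ≠ ∞ := fun x => by by_cases hx : x ∈ I <;> simp [d, hx]
  have hdI : ∀ {y}, y ∈ I → d y = ENNReal.ofReal (φ y) := fun hy => indicator_of_mem hy _
  have hκ : ∀ᵐ x, ∀ w, d x * κ x (itinCyl s w) = transferBranch s d w x :=
    ae_all_iff.mpr fun w => ae_mul_apply_eq_of_disintegration (measurable_coord 0) hd hd_fin
      hκprob hκsupp hκdis (measurableSet_itinCyl w) (measurable_transferBranch hd w)
      fun A hA => measure_itinCyl_inter_coord_zero hs hmarg w hA
  have hα : ∀ᵐ x ∂(volume.restrict I), α x = ENNReal.ofReal (φ x) • κ x := by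
    filter_upwards [ae_restrict_mem hI,
      ae_restrict_of_ae ((show (PC s).Countable from countable_range _).ae_notMem volume),
      ae_restrict_of_ae hκ, ae_restrict_of_ae ((ae_withDensity_iff hd).mp hκprob),
      ae_restrict_of_ae ((ae_withDensity_iff hd).mp hκsupp)] with x hxI hxPC hxκ hxprob hxsupp
    have hx : x ∈ I \ PC s := ⟨hxI, hxPC⟩
    have hdx₀ : d x ≠ 0 := by rw [hdI hxI]; exact (ENNReal.ofReal_pos.mpr (hφpos x hx)).ne'
    have := hxprob hdx₀
    rw [← hdI hxI]
    refine eq_smul_of_forall_itinCyl hs (hd_fin x) (hαsupp x hx) (hxsupp hdx₀) ?_ hxκ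
    intro z n hz
    rw [hαcyl x hx z.1 n hz (fun i _ => z.2.1 i) (fun i _ => z.2.2 i), hdI (z.2.1 n),
      div_eq_inv_mul, ← inv_pow, ENNReal.ofReal_mul (by positivity),
      ENNReal.ofReal_pow (by positivity)]
  refine ⟨hα, fun E hE => ?_⟩
  rw [hκdis E hE, lintegral_withDensity_eq_lintegral_mul_non_measurable _ hd
    (ae_of_all _ fun x => (hd_fin x).lt_top), ← lintegral_indicator hI]
  refine lintegral_congr_ae (((ae_restrict_iff' hI).mp hα).mono fun x hx => ?_)
  by_cases hxI : x ∈ I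
  · simp [d, hxI, hx hxI]
  · simp [d, hxI]

/-- the disintegration of `μ̂` over `π₀` satisfies `α_x = φ(x)·μ̂_x`
for Lebesgue-a.e. `x ∈ I`, and hence `μ̂(E) = ∫_I α_x(E) dm(x)` for Borel `E`. -/
theorem disintegration_formula (s : ℝ) (hs₁ : Real.sqrt 2 < s) (hs₂ : s < 2)
    (φ : ℝ → ℝ)
    (hφpos : ∀ x ∈ I \ PC s, 0 < φ x)
    (hφbv : BoundedVariationOn φ I)
    (hφeq : ∀ x ∈ I \ PC s, ∀ n : ℕ,
      φ x = ∑' y : {y : ℝ // y ∈ I ∧ (f s)^[n] y = x}, φ y.1 / s ^ n)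
    (μ : Measure ℝ) (hμprob : IsProbabilityMeasure μ) (hμerg : Ergodic (f s) μ)
    (hμdens : μ = (volume.restrict I).withDensity fun x => ENNReal.ofReal (φ x))
    (μhat : Measure (Ihat s)) (hμhatprob : IsProbabilityMeasure μhat)
    (hmarg : ∀ n : ℕ, μhat.map (fun x : Ihat s => x.1 n) = μ)
    (α : ℝ → Measure (Ihat s))
    (hαsupp : ∀ x ∈ I \ PC s, α x {z : Ihat s | z.1 0 ≠ x} = 0)
    (hαcyl : ∀ x ∈ I \ PC s, ∀ (y : ℕ → ℝ) (n : ℕ), y 0 = x →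
      (∀ i ≤ n, y i ∈ I) → (∀ i < n, f s (y (i + 1)) = y i) →
      α x (pointCyl s y n) = ENNReal.ofReal (φ (y n) / s ^ n))
    (κ : ℝ → Measure (Ihat s))
    (hκprob : ∀ᵐ x ∂μ, IsProbabilityMeasure (κ x))
    (hκsupp : ∀ᵐ x ∂μ, κ x {z : Ihat s | z.1 0 ≠ x} = 0)
    (hκdis : ∀ E : Set (Ihat s), MeasurableSet E → μhat E = ∫⁻ x, κ x E ∂μ) :
    (∀ᵐ x ∂(volume.restrict I), α x = ENNReal.ofReal (φ x) • κ x) ∧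
    ∀ E : Set (Ihat s), MeasurableSet E → μhat E = ∫⁻ x in I, α x E ∂volume :=
  disintegration_formula_general s hs₁ φ hφpos hφbv μ hμdens μhat hμhatprob hmarg α hαsupp hαcyl κ
    hκprob hκsupp hκdis

end Tent
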